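/- arXiv:1506.08975 — 2 statements merged into one kernel-verified Lean document; each statement's English description precedes it below -/
import Mathlib

section
/- For every real number s > 0 it holds that s − 1 − log s ≥ (1/2) ( (1−s) / max(1,s) )². -/
lemma sinh_le_mul_cosh (y : ℝ) (hy : 0 ≤ y) : Real.sinh y ≤ y * Real.cosh y := by
  have hmono : MonotoneOn (fun y => y * Real.cosh y - Real.sinh y) (Set.Ici 0) := by
    apply monotoneOn_of_deriv_nonneg (convex_Ici 0)
    · exact ((continuous_id.mul Real.continuous_cosh).sub Real.continuous_sinh).continuousOn
    · intro x hx
      exact (((differentiableAt_fun_id.mul Real.differentiable_cosh.differentiableAt).sub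
        Real.differentiable_sinh.differentiableAt)).differentiableWithinAt
    · intro x hx
      rw [interior_Ici, Set.mem_Ioi] at hx
      have h1 : HasDerivAt (fun y : ℝ => y * Real.cosh y - Real.sinh y)
          (1 * Real.cosh x + x * Real.sinh x - Real.cosh x) x := by
        exact ((hasDerivAt_id x).mul (Real.hasDerivAt_cosh x)).sub (Real.hasDerivAt_sinh x)
      rw [h1.deriv]
      nlinarith [Real.sinh_pos_iff.2 hx]
  have := hmono (Set.self_mem_Ici) (Set.mem_Ici.2 hy) hy
  simpa using this

lemma log_le_aux {s : ℝ} (hs : 0 < s) (hs1 : s ≤ 1) :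
    Real.log s ≤ 2 * (s - 1) / (s + 1) := by
  set a := Real.sqrt s with ha
  have ha0 : 0 < a := Real.sqrt_pos.2 hs
  have ha2 : a ^ 2 = s := Real.sq_sqrt hs.le
  have ha1 : a ≤ 1 := by nlinarith
  have hlog : Real.log s = 2 * Real.log a := by
    rw [← ha2, Real.log_pow]; push_cast; ring
  have hy : 0 ≤ -Real.log a := by
    exact neg_nonneg.2 (Real.log_nonpos ha0.le ha1)
  have h := sinh_le_mul_cosh (-Real.log a) hy
  rw [Real.sinh_neg, Real.cosh_neg, Real.sinh_log ha0, Real.cosh_log ha0] at h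
  have hinv : a * a⁻¹ = 1 := mul_inv_cancel₀ ha0.ne'
  have hcosh : 0 < (a + a⁻¹) / 2 := by positivity
  -- from h : -((a - a⁻¹)/2) ≤ -log a * ((a + a⁻¹)/2)
  have hloga : Real.log a ≤ (a - a⁻¹) / (a + a⁻¹) := by
    rw [le_div_iff₀ (by positivity)]
    nlinarith
  have heq : (a - a⁻¹) / (a + a⁻¹) = (s - 1) / (s + 1) := by
    rw [div_eq_div_iff (by positivity) (by positivity)]
    field_simp
    nlinarith
  rw [hlog]
  rw [heq] at hloga
  rw [mul_div_assoc]
  linarith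

/-- For every real `s > 0`, `s - 1 - log s ≥ (1/2) ((1-s)/max(1,s))²`. -/
theorem sub_one_sub_log_ge (s : ℝ) (hs : 0 < s) :
    s - 1 - Real.log s ≥ (1 / 2) * ((1 - s) / max 1 s) ^ 2 := by
  rcases le_total s 1 with hs1 | hs1
  · rw [max_eq_left hs1]
    have hlog := log_le_aux hs hs1
    have key : 2 * (s - 1) / (s + 1) ≤ s - 1 - (1 - s) ^ 2 / 2 := by
      rw [div_le_iff₀ (by linarith)]
      nlinarith [pow_nonneg (sub_nonneg.2 hs1) 3]
    have : ((1 - s) / 1) ^ 2 = (1 - s) ^ 2 := by norm_num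
    rw [this]
    linarith
  · rw [max_eq_right hs1]
    have hlog : Real.log s ≤ (s - s⁻¹) / 2 := by
      rcases eq_or_lt_of_le hs1 with h | h
      · simp [← h]
      · have h0 : 0 < Real.log s := Real.log_pos h
        have := (Real.self_lt_sinh_iff.2 h0).le
        rwa [Real.sinh_log hs] at this
    have hinv : s * s⁻¹ = 1 := mul_inv_cancel₀ hs.ne'
    have key : (1 / 2) * ((1 - s) / s) ^ 2 ≤ s - 1 - (s - s⁻¹) / 2 := by
      have hident : s - 1 - (s - s⁻¹) / 2 - (1 / 2) * ((1 - s) / s) ^ 2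
          = (s - 1) ^ 3 / (2 * s ^ 2) := by
        field_simp
        ring
      have hpos : 0 ≤ (s - 1) ^ 3 / (2 * s ^ 2) :=
        div_nonneg (pow_nonneg (by linarith) 3) (by positivity)
      linarith
    linarith
end

section
/- Let g : ℝⁿ → ℝ be a smooth, compactly supported function and, for λ ∈ (0,1), define the sup-convolution h_λ(z) := sup{ g(x) − (λ(1−λ)/2)|x−y|² : x, y ∈ ℝⁿ, (1−λ)x + λy = z }. Then, as λ → 0⁺, ∫_{ℝⁿ} e^{h_λ} dγ_n = ∫_{ℝⁿ} e^g dγ_n + (λ/(2(1−λ))) ∫_{ℝⁿ} |∇g|² e^g dγ_n + o(λ). -/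
open MeasureTheory Real Filter Asymptotics
open scoped ENNReal Topology

noncomputable section

/-- `ℝⁿ` with the Euclidean structure. -/
abbrev En (n : ℕ) := EuclideanSpace ℝ (Fin n)

/-- Density `φₙ` of the standard Gaussian measure on `ℝⁿ`. -/
def phiN (n : ℕ) (x : En n) : ℝ := (2 * π) ^ (-(n : ℝ) / 2) * Real.exp (-‖x‖ ^ 2 / 2)

/-- The standard Gaussian measure `γₙ` on `ℝⁿ`. -/
def gaussianN (n : ℕ) : Measure (En n) :=
  volume.withDensity fun x => ENNReal.ofReal (phiN n x)

/-- Density `φ` of the standard Gaussian measure on `ℝ`. -/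
def phi1 (x : ℝ) : ℝ := (2 * π) ^ (-(1 : ℝ) / 2) * Real.exp (-x ^ 2 / 2)

/-- The standard Gaussian measure `γ` on `ℝ`. -/
def gaussian1 : Measure ℝ := volume.withDensity fun x => ENNReal.ofReal (phi1 x)

/-- Entropy `Ent_μ(f) = ∫ f log f dμ - (∫ f dμ) log (∫ f dμ)`. -/
def gEnt {α : Type*} [MeasurableSpace α] (μ : Measure α) (f : α → ℝ) : ℝ :=
  (∫ x, f x * Real.log (f x) ∂μ) - (∫ x, f x ∂μ) * Real.log (∫ x, f x ∂μ)

/-- The sup-convolution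
`h_λ(z) = sup { g(x) - (λ(1-λ)/2)|x-y|² : (1-λ)x + λy = z }`. -/
def supConv (n : ℕ) (g : En n → ℝ) (lam : ℝ) (z : En n) : ℝ :=
  sSup {r : ℝ | ∃ x y : En n, (1 - lam) • x + lam • y = z ∧
    r = g x - lam * (1 - lam) / 2 * ‖x - y‖ ^ 2}

open scoped RealInnerProductSpace

lemma inner_gradient_apply {n : ℕ} (g : En n → ℝ) (z v : En n) :
    ⟪gradient g z, v⟫ = fderiv ℝ g z v :=
  InnerProductSpace.toDual_symm_apply

lemma norm_gradient_eq {n : ℕ} (g : En n → ℝ) (z : En n) :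
    ‖gradient g z‖ = ‖fderiv ℝ g z‖ :=
  LinearIsometryEquiv.norm_map (InnerProductSpace.toDual ℝ (En n)).symm _

lemma taylor_bound {n : ℕ} {g : En n → ℝ} (hg : ContDiff ℝ (⊤ : ℕ∞) g) (hsupp : HasCompactSupport g) :
    ∃ L : ℝ, 1 ≤ L ∧ ∀ z x : En n, |g x - g z - fderiv ℝ g z (x - z)| ≤ L * ‖x - z‖ ^ 2 := by
  have hdg : ContDiff ℝ (⊤ : ℕ∞) (fderiv ℝ g) := hg.fderiv_right (m := (⊤ : ℕ∞)) (by simp)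
  obtain ⟨C, hC⟩ := (hdg.continuous_fderiv (by simp)).bounded_above_of_compact_support
    ((hsupp.fderiv ℝ).fderiv ℝ)
  have hC0 : 0 ≤ C := le_trans (norm_nonneg _) (hC 0)
  have hlip : LipschitzWith C.toNNReal (fderiv ℝ g) := by
    apply lipschitzWith_of_nnnorm_fderiv_le (hdg.differentiable (by simp))
    intro x
    have h2 : (‖fderiv ℝ (fderiv ℝ g) x‖₊ : ℝ) ≤ (C.toNNReal : ℝ) := by
      rw [coe_nnnorm, Real.coe_toNNReal C hC0]; exact hC x
    exact_mod_cast h2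
  refine ⟨C + 1, by linarith, fun z x => ?_⟩
  have key : ‖g x - g z - (fderiv ℝ g z) (x - z)‖ ≤ (C * ‖x - z‖) * ‖x - z‖ := by
    refine Convex.norm_image_sub_le_of_norm_hasFDerivWithin_le'
      (f' := fderiv ℝ g) (φ := fderiv ℝ g z) (s := Metric.closedBall z ‖x - z‖)
      (fun u _ => ((hg.differentiable (by simp) u).hasFDerivAt).hasFDerivWithinAt)
      (fun u hu => ?_) (convex_closedBall _ _) ?_ ?_
    · have h1 : dist (fderiv ℝ g u) (fderiv ℝ g z) ≤ C * dist u z := by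
        simpa [Real.coe_toNNReal C hC0] using hlip.dist_le_mul u z
      rw [dist_eq_norm] at h1
      refine h1.trans ?_
      have : dist u z ≤ ‖x - z‖ := Metric.mem_closedBall.1 hu
      nlinarith [dist_nonneg (x := u) (y := z)]
    · simp
    · simp [Metric.mem_closedBall, dist_eq_norm]
  rw [Real.norm_eq_abs] at key
  nlinarith [sq_nonneg ‖x - z‖, norm_nonneg (x - z)]

lemma supConv_set_eq {n : ℕ} (g : En n → ℝ) {lam : ℝ} (h0 : 0 < lam) (h1 : lam < 1) (z : En n) :
    {r : ℝ | ∃ x y : En n, (1 - lam) • x + lam • y = z ∧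
      r = g x - lam * (1 - lam) / 2 * ‖x - y‖ ^ 2} =
    Set.range (fun x : En n => g x - (1 - lam) / (2 * lam) * ‖x - z‖ ^ 2) := by
  ext r
  constructor
  · rintro ⟨x, y, hxy, rfl⟩
    refine ⟨x, ?_⟩
    have hxz : x - z = lam • (x - y) := by rw [← hxy]; module
    have hn : ‖x - z‖ ^ 2 = lam ^ 2 * ‖x - y‖ ^ 2 := by
      rw [hxz, norm_smul, Real.norm_eq_abs, abs_of_pos h0, mul_pow]
    show g x - (1 - lam) / (2 * lam) * ‖x - z‖ ^ 2 = _
    rw [hn]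
    field_simp
  · rintro ⟨x, rfl⟩
    refine ⟨x, lam⁻¹ • (z - (1 - lam) • x), ?_, ?_⟩
    · rw [smul_smul, mul_inv_cancel₀ h0.ne', one_smul]; abel
    · have hxy : x - lam⁻¹ • (z - (1 - lam) • x) = lam⁻¹ • (x - z) := by
        rw [smul_sub, smul_sub]
        match_scalars <;> field_simp <;> ring
      rw [hxy, norm_smul, Real.norm_eq_abs, abs_of_pos (inv_pos.2 h0), mul_pow]
      field_simp

lemma bddAboveRange {n : ℕ} {g : En n → ℝ} {Mg c : ℝ} (hMg : ∀ x, |g x| ≤ Mg) (hc : 0 ≤ c)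
    (z : En n) : BddAbove (Set.range (fun x : En n => g x - c * ‖x - z‖ ^ 2)) := by
  refine ⟨Mg, ?_⟩
  rintro r ⟨x, rfl⟩
  have h1 : g x ≤ Mg := (abs_le.1 (hMg x)).2
  have h2 : 0 ≤ c * ‖x - z‖ ^ 2 := by positivity
  show g x - c * ‖x - z‖ ^ 2 ≤ Mg
  linarith

set_option maxHeartbeats 2000000 in
lemma supConv_bounds {n : ℕ} {g : En n → ℝ} {L M Mg : ℝ}
    (hL : 1 ≤ L) (hM : 0 ≤ M)
    (hMb : ∀ x, ‖gradient g x‖ ≤ M) (hMg : ∀ x, |g x| ≤ Mg)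
    (hTay : ∀ z x : En n, |g x - g z - fderiv ℝ g z (x - z)| ≤ L * ‖x - z‖ ^ 2)
    {lam : ℝ} (h0 : 0 < lam) (h2 : lam ≤ 1 / 2)
    (h8 : 8 * L * (lam / (2 * (1 - lam))) ≤ 1) (z : En n) :
    |supConv n g lam z - g z - lam / (2 * (1 - lam)) * ‖gradient g z‖ ^ 2|
      ≤ 8 * L * M ^ 2 * (lam / (2 * (1 - lam))) ^ 2 := by
  have h1 : lam < 1 := by linarith
  have h1' : (0:ℝ) < 1 - lam := by linarith
  have hL0 : 0 ≤ L := by linarith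
  set c : ℝ := (1 - lam) / (2 * lam) with hcdef
  have hc0 : 0 < c := by positivity
  set τ : ℝ := lam / (2 * (1 - lam)) with hτdef
  have hτ0 : 0 < τ := by positivity
  have hτl : τ ≤ lam := by
    rw [hτdef, div_le_iff₀ (by linarith)]; nlinarith
  have hτ1 : τ ≤ 1 := by linarith
  have hcτ : 4 * τ * c = 1 := by rw [hτdef, hcdef]; field_simp; ring
  have hcL : 2 * L ≤ c := by nlinarith
  clear_value τ c
  set a : ℝ := ‖gradient g z‖ with ha
  have ha0 : 0 ≤ a := norm_nonneg _
  have haM : a ≤ M := hMb z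
  clear_value a
  set e : En n → ℝ := fun x => g x - c * ‖x - z‖ ^ 2 with he
  have hsc : supConv n g lam z = sSup (Set.range e) := by
    rw [supConv, supConv_set_eq g h0 h1 z, he, ← hcdef]
  have hbdd : BddAbove (Set.range e) := bddAboveRange hMg hc0.le z
  -- upper bound
  have hub : supConv n g lam z ≤ g z + (τ + 8 * L * τ ^ 2) * a ^ 2 := by
    rw [hsc]
    refine csSup_le ⟨e z, z, rfl⟩ ?_
    rintro r ⟨x, rfl⟩
    show g x - c * ‖x - z‖ ^ 2 ≤ g z + (τ + 8 * L * τ ^ 2) * a ^ 2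
    set s : ℝ := ‖x - z‖ with hs
    have hs0 : 0 ≤ s := norm_nonneg _
    have hfd : fderiv ℝ g z (x - z) ≤ a * s := by
      rw [← inner_gradient_apply]
      rw [ha, hs]
      exact real_inner_le_norm _ _
    have hgx : g x ≤ g z + a * s + L * s ^ 2 := by
      have := (abs_le.1 (hTay z x)).2
      linarith
    have p1 : 8 * L * τ ^ 2 ≤ τ := by nlinarith
    have p2 : 32 * c * L * τ ^ 2 = 8 * L * τ := by linear_combination (8 * L * τ) * hcτ
    have key1 : 1 ≤ 4 * (c - L) * (τ + 8 * L * τ ^ 2) := by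
      nlinarith [p1, p2, mul_nonneg hL0 hτ0.le, hτ1]
    have hQ0 : 0 < c - L := by linarith
    have h1 : a ^ 2 * 1 ≤ a ^ 2 * (4 * (c - L) * (τ + 8 * L * τ ^ 2)) :=
      mul_le_mul_of_nonneg_left key1 (sq_nonneg a)
    have hams : a * s ≤ (τ + 8 * L * τ ^ 2) * a ^ 2 + (c - L) * s ^ 2 := by
      have h4Q : (0:ℝ) < 4 * (c - L) := by linarith
      have h2 : 4 * (c - L) * (a * s) ≤
          4 * (c - L) * ((τ + 8 * L * τ ^ 2) * a ^ 2 + (c - L) * s ^ 2) := by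
        nlinarith [sq_nonneg (a - 2 * (c - L) * s), h1]
      exact (mul_le_mul_iff_right₀ h4Q).1 h2
    linarith
  -- lower bound
  have hlb : g z + (τ - 4 * L * τ ^ 2) * a ^ 2 ≤ supConv n g lam z := by
    rw [hsc]
    set x₀ : En n := z + (2 * τ) • gradient g z with hx₀
    have hmem : e x₀ ∈ Set.range e := ⟨x₀, rfl⟩
    refine le_trans ?_ (le_csSup hbdd hmem)
    have hxz : x₀ - z = (2 * τ) • gradient g z := by rw [hx₀, add_sub_cancel_left]
    clear_value x₀
    have hnorm : ‖x₀ - z‖ ^ 2 = 4 * τ ^ 2 * a ^ 2 := by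
      rw [hxz, norm_smul, Real.norm_eq_abs, abs_of_pos (by linarith), mul_pow, ← ha]; ring
    have hfd : fderiv ℝ g z (x₀ - z) = 2 * τ * a ^ 2 := by
      rw [← inner_gradient_apply, hxz, real_inner_smul_right, real_inner_self_eq_norm_sq, ← ha]
    have hgx : g z + 2 * τ * a ^ 2 - L * (4 * τ ^ 2 * a ^ 2) ≤ g x₀ := by
      have ht := (abs_le.1 (hTay z x₀)).1
      rw [hfd, hnorm] at ht
      linarith
    show g z + (τ - 4 * L * τ ^ 2) * a ^ 2 ≤ g x₀ - c * ‖x₀ - z‖ ^ 2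
    rw [hnorm]
    have h4cτ : c * (4 * τ ^ 2 * a ^ 2) = τ * a ^ 2 := by
      linear_combination (a ^ 2 * τ) * hcτ
    have hexp : (τ - 4 * L * τ ^ 2) * a ^ 2 = τ * a ^ 2 - 4 * L * τ ^ 2 * a ^ 2 := by ring
    rw [h4cτ]
    linarith [hgx, hexp]
  clear_value e
  clear he hsc hbdd hMb hMg hTay ha
  generalize hS : supConv n g lam z = S at hub hlb ⊢
  have haM2 : a ^ 2 ≤ M ^ 2 := pow_le_pow_left₀ ha0 haM 2
  have hfac : (0:ℝ) ≤ 8 * L * τ ^ 2 := by positivity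
  have e1 : 8 * L * τ ^ 2 * a ^ 2 ≤ 8 * L * τ ^ 2 * M ^ 2 :=
    mul_le_mul_of_nonneg_left haM2 hfac
  have e2 : 4 * L * τ ^ 2 * a ^ 2 ≤ 8 * L * τ ^ 2 * M ^ 2 := by
    have h4 : (0:ℝ) ≤ 4 * L * τ ^ 2 := by positivity
    exact le_trans (mul_le_mul_of_nonneg_right (by linarith) (sq_nonneg a)) e1
  have hexp2 : (τ - 4 * L * τ ^ 2) * a ^ 2 = τ * a ^ 2 - 4 * L * τ ^ 2 * a ^ 2 := by ring
  have hexp3 : (τ + 8 * L * τ ^ 2) * a ^ 2 = τ * a ^ 2 + 8 * L * τ ^ 2 * a ^ 2 := by ring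
  have hexp4 : 8 * L * M ^ 2 * τ ^ 2 = 8 * L * τ ^ 2 * M ^ 2 := by ring
  rw [abs_le]
  constructor
  · linarith
  · linarith

lemma supConv_measurable {n : ℕ} {g : En n → ℝ} (hg : Continuous g) {Mg : ℝ}
    (hMg : ∀ x, |g x| ≤ Mg) {lam : ℝ} (h0 : 0 < lam) (h1 : lam < 1) :
    Measurable (supConv n g lam) := by
  have hc0 : (0:ℝ) ≤ (1 - lam) / (2 * lam) := by
    have : (0:ℝ) < 1 - lam := by linarith
    positivity
  set c : ℝ := (1 - lam) / (2 * lam) with hc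
  set u : ℕ → En n := TopologicalSpace.denseSeq (En n) with hu
  have hdense : DenseRange u := TopologicalSpace.denseRange_denseSeq (En n)
  have hbdd : ∀ z : En n, BddAbove (Set.range fun x => g x - c * ‖x - z‖ ^ 2) :=
    fun z => bddAboveRange hMg hc0 z
  have hbdd' : ∀ z : En n, BddAbove (Set.range fun i => g (u i) - c * ‖u i - z‖ ^ 2) := by
    intro z
    refine (hbdd z).mono ?_
    rintro r ⟨i, rfl⟩
    exact ⟨u i, rfl⟩
  have key : ∀ z : En n, supConv n g lam z = ⨆ i, (g (u i) - c * ‖u i - z‖ ^ 2) := by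
    intro z
    rw [supConv, supConv_set_eq g h0 h1 z, ← hc]
    have : sSup (Set.range fun x : En n => g x - c * ‖x - z‖ ^ 2)
        = ⨆ x : En n, (g x - c * ‖x - z‖ ^ 2) := rfl
    rw [this]
    apply le_antisymm
    · refine ciSup_le fun x => ?_
      refine le_of_forall_pos_le_add fun ε hε => ?_
      have hcont : ContinuousAt (fun y : En n => g y - c * ‖y - z‖ ^ 2) x := by
        exact (hg.sub (continuous_const.mul
          (((continuous_id.sub continuous_const).norm).pow 2))).continuousAt
      have hmem : (fun y : En n => g y - c * ‖y - z‖ ^ 2) ⁻¹'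
          Set.Ioi (g x - c * ‖x - z‖ ^ 2 - ε) ∈ 𝓝 x :=
        hcont (Ioi_mem_nhds (by beta_reduce; linarith))
      obtain ⟨O, hOsub, hOopen, hxO⟩ := mem_nhds_iff.1 hmem
      obtain ⟨i, hiO⟩ := hdense.exists_mem_open hOopen ⟨x, hxO⟩
      have h1 : g x - c * ‖x - z‖ ^ 2 - ε < g (u i) - c * ‖u i - z‖ ^ 2 := hOsub hiO
      have h2 : g (u i) - c * ‖u i - z‖ ^ 2 ≤ ⨆ i, (g (u i) - c * ‖u i - z‖ ^ 2) :=
        le_ciSup (hbdd' z) i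
      linarith
    · refine ciSup_le fun i => le_ciSup (hbdd z) (u i)
  have : supConv n g lam = fun z => ⨆ i, (g (u i) - c * ‖u i - z‖ ^ 2) := funext key
  rw [this]
  refine Measurable.iSup fun i => ?_
  exact (continuous_const.sub (continuous_const.mul
    (((continuous_const.sub continuous_id).norm).pow 2))).measurable

lemma integrable_phiN (n : ℕ) : Integrable (phiN n) := by
  have h1 : Integrable (fun v : En n => Complex.exp (-(1/2 : ℂ) * ‖v‖ ^ 2 + 0 * ⟪0, v⟫)) :=
    GaussianFourier.integrable_cexp_neg_mul_sq_norm_add (by norm_num) 0 (0 : En n)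
  have h2 : Integrable (fun v : En n => Real.exp (-‖v‖ ^ 2 / 2)) := by
    have := h1.re
    refine this.congr (Eventually.of_forall fun v => ?_)
    simp only [zero_mul, add_zero]
    have : (-(1/2 : ℂ) * (‖v‖ : ℂ) ^ 2) = ((-‖v‖ ^ 2 / 2 : ℝ) : ℂ) := by
      push_cast; ring
    rw [this]
    exact Complex.exp_ofReal_re _
  exact h2.const_mul _

instance gaussianN_finite (n : ℕ) : IsFiniteMeasure (gaussianN n) :=
  isFiniteMeasure_withDensity_ofReal (integrable_phiN n).hasFiniteIntegral

lemma integrable_of_bounded_measurable {n : ℕ} {f : En n → ℝ} {C : ℝ}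
    (hf : Measurable f) (hC : ∀ x, |f x| ≤ C) : Integrable f (gaussianN n) :=
  ⟨hf.aestronglyMeasurable, HasFiniteIntegral.of_bounded (C := C)
    (ae_of_all _ fun x => by rw [Real.norm_eq_abs]; exact hC x)⟩

lemma exp_est {x y : ℝ} (hx : |x| ≤ 1) : |rexp x - 1 - y| ≤ x ^ 2 + |x - y| := by
  have h := Real.abs_exp_sub_one_sub_id_le hx
  have hsplit : rexp x - 1 - y = (rexp x - 1 - x) + (x - y) := by ring
  rw [hsplit]
  exact (abs_add_le _ _).trans (add_le_add_left h _)

set_option maxHeartbeats 2000000 in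
/-- First-order expansion, as `λ → 0⁺`, of `∫ e^{h_λ} dγₙ` where `h_λ` is the
sup-convolution of a smooth compactly supported `g`:
it equals `∫ e^g dγₙ + (λ/(2(1-λ))) ∫ |∇g|² e^g dγₙ + o(λ)`. -/
theorem expansion_supConv (n : ℕ) (g : En n → ℝ) (hg : ContDiff ℝ (⊤ : ℕ∞) g)
    (hsupp : HasCompactSupport g) :
    (fun lam : ℝ =>
        (∫ x, Real.exp (supConv n g lam x) ∂gaussianN n) -
          (∫ x, Real.exp (g x) ∂gaussianN n) -
          lam / (2 * (1 - lam)) * ∫ x, ‖gradient g x‖ ^ 2 * Real.exp (g x) ∂gaussianN n)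
      =o[𝓝[>] (0 : ℝ)] fun lam => lam := by
  obtain ⟨L, hL, hTay⟩ := taylor_bound hg hsupp
  have hL0 : 0 ≤ L := by linarith
  have hfdc : Continuous (fderiv ℝ g) := (hg.fderiv_right (m := (⊤ : ℕ∞)) (by simp)).continuous
  obtain ⟨M0, hM0⟩ := (hsupp.fderiv ℝ).exists_bound_of_continuous hfdc
  set M : ℝ := max M0 0 with hMdef
  have hM : 0 ≤ M := le_max_right _ _
  have hMb : ∀ x, ‖gradient g x‖ ≤ M := fun x =>
    (norm_gradient_eq g x).le.trans ((hM0 x).trans (le_max_left _ _))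
  obtain ⟨Mg0, hMg0⟩ := hsupp.exists_bound_of_continuous hg.continuous
  set Mg : ℝ := max Mg0 0 with hMgdef
  have hMgnn : 0 ≤ Mg := le_max_right _ _
  have hMg : ∀ x, |g x| ≤ Mg := fun x => by
    rw [← Real.norm_eq_abs]; exact (hMg0 x).trans (le_max_left _ _)
  -- constants
  set K1 : ℝ := 8 * L * M ^ 2 with hK1def
  have hK1 : 0 ≤ K1 := by positivity
  set Kd : ℝ := Real.exp Mg * ((M ^ 2 + K1) ^ 2 + K1) with hKddef
  have hKd : 0 ≤ Kd := by positivity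
  set Kfin : ℝ := Kd * ((gaussianN n) Set.univ).toReal with hKfindef
  have hKfin : 0 ≤ Kfin := mul_nonneg hKd ENNReal.toReal_nonneg
  -- gradient continuity
  have hgradc : Continuous (gradient g) := by
    exact (InnerProductSpace.toDual ℝ (En n)).symm.continuous.comp hfdc
  -- fixed integrable functions
  have ig : Integrable (fun x => Real.exp (g x)) (gaussianN n) := by
    refine integrable_of_bounded_measurable (C := Real.exp Mg)
      (Real.measurable_exp.comp hg.continuous.measurable) fun x => ?_
    rw [abs_of_pos (Real.exp_pos _)]
    exact Real.exp_le_exp.2 ((abs_le.1 (hMg x)).2)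
  have igr : Integrable (fun x => ‖gradient g x‖ ^ 2 * Real.exp (g x)) (gaussianN n) := by
    refine integrable_of_bounded_measurable (C := M ^ 2 * Real.exp Mg)
      (((hgradc.norm.pow 2).mul (Real.continuous_exp.comp hg.continuous)).measurable)
      fun x => ?_
    rw [abs_of_nonneg (by positivity)]
    have h1 : ‖gradient g x‖ ^ 2 ≤ M ^ 2 := pow_le_pow_left₀ (norm_nonneg _) (hMb x) 2
    have h2 : Real.exp (g x) ≤ Real.exp Mg := Real.exp_le_exp.2 ((abs_le.1 (hMg x)).2)
    exact mul_le_mul h1 h2 (Real.exp_pos _).le (by positivity)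
  -- the main quantitative bound, for small positive lam
  have main : ∀ lam : ℝ, 0 < lam → lam ≤ 1 / 2 → lam ≤ 1 / (8 * L) →
      lam ≤ 1 / (M ^ 2 + K1 + 1) →
      |(∫ x, Real.exp (supConv n g lam x) ∂gaussianN n) -
          (∫ x, Real.exp (g x) ∂gaussianN n) -
          lam / (2 * (1 - lam)) * ∫ x, ‖gradient g x‖ ^ 2 * Real.exp (g x) ∂gaussianN n|
        ≤ Kfin * lam ^ 2 := by
    intro lam h0 h2 h8lam hsmalllam
    have h1 : lam < 1 := by linarith
    have h1' : (0:ℝ) < 1 - lam := by linarith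
    set τ : ℝ := lam / (2 * (1 - lam)) with hτdef
    have hτ0 : 0 < τ := by positivity
    have hτl : τ ≤ lam := by
      rw [hτdef, div_le_iff₀ (by linarith)]; nlinarith
    have hτ1 : τ ≤ 1 := by linarith
    have h8 : 8 * L * τ ≤ 1 := by
      have : 8 * L * lam ≤ 1 := by
        rw [le_div_iff₀ (by positivity)] at h8lam; linarith
      nlinarith
    have hsmall : τ * (M ^ 2 + K1) ≤ 1 := by
      have : lam * (M ^ 2 + K1 + 1) ≤ 1 := by
        rw [le_div_iff₀ (by positivity)] at hsmalllam; linarith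
      nlinarith
    clear_value τ
    have hdev : ∀ z, |supConv n g lam z - g z - τ * ‖gradient g z‖ ^ 2| ≤ K1 * τ ^ 2 := by
      intro z
      have := supConv_bounds hL hM hMb hMg hTay h0 h2 (by rw [← hτdef]; exact h8) z
      rw [← hτdef] at this
      exact this
    -- boundedness of supConv
    have hSb : ∀ z, |supConv n g lam z| ≤ Mg + M ^ 2 + K1 := by
      intro z
      have hd := hdev z
      have ha2 : ‖gradient g z‖ ^ 2 ≤ M ^ 2 := pow_le_pow_left₀ (norm_nonneg _) (hMb z) 2
      have hgz := abs_le.1 (hMg z)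
      have hd' := abs_le.1 hd
      have p1 : τ * ‖gradient g z‖ ^ 2 ≤ M ^ 2 := by nlinarith [sq_nonneg ‖gradient g z‖]
      have p2 : K1 * τ ^ 2 ≤ K1 := by
        nlinarith [mul_nonneg (mul_nonneg hK1 hτ0.le) (sub_nonneg.2 hτ1),
          mul_nonneg hK1 (sub_nonneg.2 hτ1)]
      have p3 : 0 ≤ τ * ‖gradient g z‖ ^ 2 := by positivity
      rw [abs_le]
      constructor <;> nlinarith
    have ihS : Integrable (fun x => Real.exp (supConv n g lam x)) (gaussianN n) := by
      refine integrable_of_bounded_measurable (C := Real.exp (Mg + M ^ 2 + K1))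
        (Real.measurable_exp.comp (supConv_measurable hg.continuous hMg h0 h1)) fun x => ?_
      rw [abs_of_pos (Real.exp_pos _)]
      exact Real.exp_le_exp.2 ((abs_le.1 (hSb x)).2)
    -- rewrite difference as single integral
    have main_eq : (∫ x, Real.exp (supConv n g lam x) ∂gaussianN n) -
          (∫ x, Real.exp (g x) ∂gaussianN n) -
          τ * ∫ x, ‖gradient g x‖ ^ 2 * Real.exp (g x) ∂gaussianN n
        = ∫ x, (Real.exp (supConv n g lam x) - Real.exp (g x)
            - τ * (‖gradient g x‖ ^ 2 * Real.exp (g x))) ∂gaussianN n := by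
      have hint1 : Integrable (fun x => Real.exp (supConv n g lam x) - Real.exp (g x))
          (gaussianN n) := ihS.sub ig
      have hint2 : Integrable (fun x => τ * (‖gradient g x‖ ^ 2 * Real.exp (g x)))
          (gaussianN n) := igr.const_mul τ
      rw [integral_sub hint1 hint2, integral_sub ihS ig, integral_const_mul]
    rw [main_eq]
    -- pointwise bound of the integrand
    have hbound : ∀ x, ‖Real.exp (supConv n g lam x) - Real.exp (g x)
        - τ * (‖gradient g x‖ ^ 2 * Real.exp (g x))‖ ≤ Kd * τ ^ 2 := by
      intro x
      have hd := hdev x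
      have haM : ‖gradient g x‖ ≤ M := hMb x
      have hGb : |g x| ≤ Mg := hMg x
      generalize hS : supConv n g lam x = S at hd ⊢
      generalize hA : ‖gradient g x‖ = a at hd haM ⊢
      generalize hG : g x = G at hd hGb ⊢
      have ha0 : 0 ≤ a := hA ▸ norm_nonneg _
      have ha2 : a ^ 2 ≤ M ^ 2 := pow_le_pow_left₀ ha0 haM 2
      set w : ℝ := S - G with hwdef
      have hdev' : |w - τ * a ^ 2| ≤ K1 * τ ^ 2 := hd
      have hta : τ * a ^ 2 ≤ τ * M ^ 2 := by nlinarith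
      have hKτ : K1 * τ ^ 2 ≤ K1 * τ := by
        nlinarith [mul_nonneg (mul_nonneg hK1 hτ0.le) (sub_nonneg.2 hτ1)]
      have habsw : |w| ≤ τ * (M ^ 2 + K1) := by
        have := abs_le.1 hdev'
        have h2' : 0 ≤ τ * a ^ 2 := by positivity
        rw [abs_le]
        constructor <;> nlinarith [abs_nonneg (w - τ * a ^ 2)]
      have hw1 : |w| ≤ 1 := habsw.trans hsmall
      have hest : |rexp w - 1 - τ * a ^ 2| ≤ w ^ 2 + |w - τ * a ^ 2| := exp_est hw1
      have hw2 : w ^ 2 ≤ (τ * (M ^ 2 + K1)) ^ 2 := by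
        rw [← sq_abs]
        exact pow_le_pow_left₀ (abs_nonneg _) habsw 2
      have hest2 : |rexp w - 1 - τ * a ^ 2| ≤ ((M ^ 2 + K1) ^ 2 + K1) * τ ^ 2 := by
        have : (τ * (M ^ 2 + K1)) ^ 2 = (M ^ 2 + K1) ^ 2 * τ ^ 2 := by ring
        nlinarith [hdev']
      have hsplit : rexp S - rexp G - τ * (a ^ 2 * rexp G)
          = rexp G * (rexp w - 1 - τ * a ^ 2) := by
        rw [show S = G + w by rw [hwdef]; ring, Real.exp_add]; ring
      rw [Real.norm_eq_abs, hsplit, abs_mul, abs_of_pos (Real.exp_pos G)]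
      have hexpG : rexp G ≤ rexp Mg := Real.exp_le_exp.2 ((abs_le.1 hGb).2)
      calc rexp G * |rexp w - 1 - τ * a ^ 2|
          ≤ rexp Mg * (((M ^ 2 + K1) ^ 2 + K1) * τ ^ 2) :=
            mul_le_mul hexpG hest2 (abs_nonneg _) (Real.exp_pos _).le
        _ = Kd * τ ^ 2 := by rw [hKddef]; ring
    have hnorm : ‖∫ x, (Real.exp (supConv n g lam x) - Real.exp (g x)
        - τ * (‖gradient g x‖ ^ 2 * Real.exp (g x))) ∂gaussianN n‖
        ≤ Kd * τ ^ 2 * ((gaussianN n) Set.univ).toReal :=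
      norm_integral_le_of_norm_le_const (ae_of_all _ hbound)
    rw [Real.norm_eq_abs] at hnorm
    have hτ2 : τ ^ 2 ≤ lam ^ 2 := pow_le_pow_left₀ hτ0.le hτl 2
    calc |∫ x, (Real.exp (supConv n g lam x) - Real.exp (g x)
        - τ * (‖gradient g x‖ ^ 2 * Real.exp (g x))) ∂gaussianN n|
        ≤ Kd * τ ^ 2 * ((gaussianN n) Set.univ).toReal := hnorm
      _ = Kfin * τ ^ 2 := by rw [hKfindef]; ring
      _ ≤ Kfin * lam ^ 2 := mul_le_mul_of_nonneg_left hτ2 hKfin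
  -- conclude littleO
  rw [isLittleO_iff]
  intro ε hε
  have hδpos : 0 < min (min (1/2) (1 / (8 * L))) (min (1 / (M ^ 2 + K1 + 1)) (ε / (Kfin + 1))) := by
    have : (0:ℝ) < 1 / (8 * L) := by positivity
    have : (0:ℝ) < 1 / (M ^ 2 + K1 + 1) := by positivity
    have : (0:ℝ) < ε / (Kfin + 1) := by positivity
    simp only [lt_min_iff]
    refine ⟨⟨by norm_num, by positivity⟩, by positivity, by positivity⟩
  filter_upwards [Ioo_mem_nhdsGT_of_mem (Set.mem_Ico.2 ⟨le_refl (0:ℝ), hδpos⟩)] with lam hlam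
  obtain ⟨h0, hup⟩ := hlam
  simp only [lt_min_iff] at hup
  obtain ⟨⟨hu1, hu2⟩, hu3, hu4⟩ := hup
  have hb := main lam h0 hu1.le hu2.le hu3.le
  rw [Real.norm_eq_abs, Real.norm_eq_abs, abs_of_pos h0]
  refine hb.trans ?_
  have : Kfin * lam ≤ ε := by
    have h1 : Kfin * lam ≤ Kfin * (ε / (Kfin + 1)) := mul_le_mul_of_nonneg_left hu4.le hKfin
    have h2 : Kfin * (ε / (Kfin + 1)) ≤ ε := by
      rw [div_eq_inv_mul, ← mul_assoc]
      have : Kfin * (Kfin + 1)⁻¹ ≤ 1 := by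
        rw [mul_inv_le_iff₀ (by positivity)]; linarith
      nlinarith
    linarith
  nlinarith
end
end
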